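/- arXiv:2605.04990 — 2 statements merged into one kernel-verified Lean document; each statement's English description precedes it below -/
import Mathlib

section
/- Let b ≥ 0, ℓ ≥ 2, and a - b(b-1)/2 ≡ ℓ (mod 2). If b(b-1)/2 + 2b(ℓ-2) + (ℓ-2)² < a ≤ b(b-1)/2 + 2bℓ + ℓ², or b(b-1)/2 - ℓ² ≤ a < b(b-1)/2 - (ℓ-2)², then (a, b)^T has a representation in base M = [[1,1],[0,1]] over digits {p, m} containing exactly ℓ occurrences of m (hence of length b + 2ℓ). -/
/-!
Since `M ^ i = [[1, i], [0, 1]]`, the digit at position `i` contributes `±(i, 1)`. A word of length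
`k` whose `m`'s sit at the positions `s ⊆ {0, …, k-1}` therefore represents
`(k(k-1)/2 - 2 ∑ s, k - 2 |s|)`. The sums of `ℓ`-element subsets of `{0, …, k-1}` fill the whole
interval `[ℓ(ℓ-1)/2, ℓ(ℓ-1)/2 + ℓ(k-ℓ)]` (choose the largest element greedily and recurse). For
`k = b + 2ℓ` this reaches every `a` of the right parity with
`b(b-1)/2 - ℓ² ≤ a ≤ b(b-1)/2 + 2bℓ + ℓ²`, a window containing both ranges of the theorem.
-/

/-- The Jordan block `[[1,1],[0,1]]`. -/
def M1 : Matrix (Fin 2) (Fin 2) ℤ := !![1, 1; 0, 1]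

/-- The digit `p = (0,1)ᵀ`. -/
def pd : Fin 2 → ℤ := ![0, 1]

/-- The digit `m = (0,-1)ᵀ`. -/
def md : Fin 2 → ℤ := ![0, -1]

/-- The vector represented by the word `d_{k-1} … d_0`, namely `∑ M^i d_i`. -/
def val1 {k : ℕ} (d : Fin k → (Fin 2 → ℤ)) : Fin 2 → ℤ :=
  ∑ i : Fin k, (M1 ^ (i : ℕ)).mulVec (d i)

open Matrix

theorem Finset.exists_subset_range_card_eq_sum_eq (ℓ d r : ℕ) (hr : r ≤ ℓ * d) :
    ∃ s ⊆ Finset.range (ℓ + d), s.card = ℓ ∧ ∑ i ∈ s, i = ℓ.choose 2 + r := by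
  induction ℓ generalizing d r with
  | zero => exact ⟨∅, by simp, rfl, by simp_all⟩
  | succ ℓ ih =>
    -- the new largest element `ℓ + j` absorbs as much of the excess `r` as fits below `ℓ + d`
    set j := min r d
    obtain ⟨s, hs, hcard, hsum⟩ := ih j (r - j) <| by
      rcases le_total r d with h | h
      · simp [j, h]
      · simp only [j, min_eq_right h]; rw [Nat.succ_mul] at hr; omega
    have hnotMem : ℓ + j ∉ s := fun h => by simpa using hs h
    refine ⟨insert (ℓ + j) s, Finset.insert_subset (by simp; omega) (hs.trans ?_), ?_, ?_⟩
    · exact Finset.range_subset_range.mpr (by omega)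
    · rw [Finset.card_insert_of_notMem hnotMem, hcard]
    · have hchoose : (ℓ + 1).choose 2 = ℓ.choose 2 + ℓ := by
        rw [Nat.choose_succ_succ', Nat.choose_one_right, add_comm]
      rw [Finset.sum_insert hnotMem, hsum, hchoose]
      omega

lemma M1_pow (n : ℕ) : M1 ^ n = !![1, (n : ℤ); 0, 1] := by
  induction n with
  | zero => simp [one_fin_two]
  | succ n ih =>
    rw [pow_succ, ih, M1, mul_fin_two]
    push_cast; ring_nf

lemma M1_pow_mulVec_pd (n : ℕ) : M1 ^ n *ᵥ pd = ![(n : ℤ), 1] := by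
  ext j; fin_cases j <;> simp [M1_pow, pd]

lemma md_eq_neg_pd : md = -pd := by
  simp [md, pd]

lemma Finset.sum_vec_natCast_one (t : Finset ℕ) :
    ∑ i ∈ t, ![(i : ℤ), 1] = ![((∑ i ∈ t, i : ℕ) : ℤ), t.card] := by
  ext j; fin_cases j <;> simp [Finset.sum_apply]

lemma two_mul_natCast_choose_two (n : ℕ) : 2 * (n.choose 2 : ℤ) = n * (n - 1) := by
  induction n with
  | zero => simp
  | succ n ih => rw [Nat.choose_succ_succ', Nat.choose_one_right]; push_cast; linarith

def signWord (k : ℕ) (s : Finset ℕ) : Fin k → Fin 2 → ℤ := fun i => if (i : ℕ) ∈ s then md else pd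

lemma val1_signWord {k : ℕ} {s : Finset ℕ} (hs : s ⊆ Finset.range k) :
    val1 (signWord k s) = ![(k.choose 2 : ℤ) - 2 * (∑ i ∈ s, i : ℕ), (k : ℤ) - 2 * s.card] := by
  have hterm (n : ℕ) : M1 ^ n *ᵥ (if n ∈ s then md else pd) =
      ![(n : ℤ), 1] - if n ∈ s then 2 • ![(n : ℤ), 1] else 0 := by
    split_ifs
    · rw [md_eq_neg_pd, mulVec_neg, M1_pow_mulVec_pd, two_smul]; abel
    · rw [M1_pow_mulVec_pd, sub_zero]
  simp only [val1, signWord]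
  rw [Fin.sum_univ_eq_sum_range (fun n => M1 ^ n *ᵥ (if n ∈ s then md else pd)) k]
  simp only [hterm, Finset.sum_sub_distrib, Finset.sum_ite_mem, Finset.inter_eq_right.mpr hs,
    ← Finset.smul_sum, Finset.sum_vec_natCast_one, Finset.sum_range_id, ← Nat.choose_two_right,
    Finset.card_range]
  ext j; fin_cases j <;> simp

lemma card_filter_signWord_eq_md {k : ℕ} {s : Finset ℕ} (hs : s ⊆ Finset.range k) :
    (Finset.univ.filter fun i : Fin k => signWord k s i = md).card = s.card := by
  have hpd : pd ≠ md := by simp [pd, md]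
  simp only [signWord, ite_eq_left_iff, hpd, imp_false, not_not]
  rw [Finset.card_filter, Fin.sum_univ_eq_sum_range (fun n => if n ∈ s then 1 else 0),
    Finset.sum_ite_mem, Finset.inter_eq_right.mpr hs, Finset.card_eq_sum_ones]

theorem exists_repr_card_md (k ℓ r : ℕ) (hℓk : ℓ ≤ k) (hr : r ≤ ℓ * (k - ℓ)) :
    ∃ d : Fin k → Fin 2 → ℤ, (∀ i, d i = pd ∨ d i = md) ∧
      (Finset.univ.filter fun i => d i = md).card = ℓ ∧
      val1 d = ![(k.choose 2 : ℤ) - 2 * (ℓ.choose 2 + r : ℕ), (k : ℤ) - 2 * ℓ] := by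
  obtain ⟨s, hs, hcard, hsum⟩ := Finset.exists_subset_range_card_eq_sum_eq ℓ (k - ℓ) r hr
  rw [Nat.add_sub_cancel' hℓk] at hs
  refine ⟨signWord k s, fun i => ?_, by rw [card_filter_signWord_eq_md hs, hcard],
    by rw [val1_signWord hs, hsum, hcard]⟩
  unfold signWord
  split_ifs <;> simp

theorem exists_repr_card_md_of_le_of_le (b ℓ : ℕ) (a : ℤ)
    (hpar : (a - b.choose 2) % 2 = ℓ % 2)
    (hlo : (b.choose 2 : ℤ) - ℓ ^ 2 ≤ a) (hhi : a ≤ b.choose 2 + 2 * b * ℓ + ℓ ^ 2) :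
    ∃ d : Fin (b + 2 * ℓ) → Fin 2 → ℤ, (∀ i, d i = pd ∨ d i = md) ∧
      (Finset.univ.filter fun i => d i = md).card = ℓ ∧ val1 d = ![a, b] := by
  have hb := two_mul_natCast_choose_two b
  have hℓ := two_mul_natCast_choose_two ℓ
  have hk := two_mul_natCast_choose_two (b + 2 * ℓ)
  obtain ⟨r, hr⟩ : ∃ r : ℤ, (b.choose 2 : ℤ) + 2 * b * ℓ + ℓ ^ 2 - a = 2 * r := by
    have hX : (b.choose 2 : ℤ) + 2 * b * ℓ + ℓ ^ 2 - a =
        (b.choose 2 - a + ℓ) + 2 * (b * ℓ + ℓ.choose 2) := by linear_combination (-1 : ℤ) * hℓ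
    rw [hX]
    generalize (b : ℤ) * ℓ + ℓ.choose 2 = u
    exact ⟨(b.choose 2 - a + ℓ) / 2 + u, by omega⟩
  lift r to ℕ using by linarith
  have hrle : r ≤ ℓ * (b + 2 * ℓ - ℓ) := by
    rw [show b + 2 * ℓ - ℓ = b + ℓ by omega]
    exact_mod_cast (show (r : ℤ) ≤ ℓ * (b + ℓ) by nlinarith)
  obtain ⟨d, hdigits, hcard, hval⟩ := exists_repr_card_md (b + 2 * ℓ) ℓ r (by omega) hrle
  refine ⟨d, hdigits, hcard, hval.trans ?_⟩
  congr 2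
  · push_cast at hk ⊢; linarith
  · push_cast; ring

theorem stmt6 (b ℓ : ℕ) (hℓ : 2 ≤ ℓ) (a : ℤ)
    (hpar : (a - (b : ℤ) * ((b : ℤ) - 1) / 2) % 2 = (ℓ : ℤ) % 2)
    (hin : ((b : ℤ) * ((b : ℤ) - 1) / 2 + 2 * (b : ℤ) * ((ℓ : ℤ) - 2) + ((ℓ : ℤ) - 2) ^ 2 < a
            ∧ a ≤ (b : ℤ) * ((b : ℤ) - 1) / 2 + 2 * (b : ℤ) * (ℓ : ℤ) + (ℓ : ℤ) ^ 2)
         ∨ ((b : ℤ) * ((b : ℤ) - 1) / 2 - (ℓ : ℤ) ^ 2 ≤ a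
            ∧ a < (b : ℤ) * ((b : ℤ) - 1) / 2 - ((ℓ : ℤ) - 2) ^ 2)) :
    ∃ d : Fin (b + 2 * ℓ) → (Fin 2 → ℤ),
      (∀ i, d i = pd ∨ d i = md) ∧
      (Finset.univ.filter (fun i : Fin (b + 2 * ℓ) => d i = md)).card = ℓ ∧
      val1 d = ![a, (b : ℤ)] := by
  have hchoose : (b : ℤ) * ((b : ℤ) - 1) / 2 = b.choose 2 := by
    rw [← two_mul_natCast_choose_two, Int.mul_ediv_cancel_left _ two_ne_zero]
  rw [hchoose] at hpar hin
  have hb : (0 : ℤ) ≤ b := b.cast_nonneg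
  have hℓ' : (2 : ℤ) ≤ ℓ := by exact_mod_cast hℓ
  apply exists_repr_card_md_of_le_of_le b ℓ a hpar
  · rcases hin with ⟨h, -⟩ | ⟨h, -⟩
    · nlinarith [mul_nonneg hb (sub_nonneg.mpr hℓ')]
    · exact h
  · rcases hin with ⟨-, h⟩ | ⟨-, h⟩
    · exact h
    · nlinarith [mul_nonneg hb (by linarith : (0 : ℤ) ≤ ℓ)]
end

section
/- For every vector (a,b)^T ∈ Z², the minimal weight wt(a,b) of a representation in base M = [[-1,1],[0,-1]] with digits {(0,1)^T, (0,0)^T} belongs to {|b|, |b|+2, |b|+4}. -/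
/-- The Jordan block `[[-1,1],[0,-1]]`. -/
def M2 : Matrix (Fin 2) (Fin 2) ℤ := !![-1, 1; 0, -1]

/-- The zero digit `z = (0,0)ᵀ`. -/
def zd : Fin 2 → ℤ := ![0, 0]

/-- The vector represented by the word `d_{k-1} … d_0`, namely `∑ M^i d_i`. -/
def val2 {k : ℕ} (d : Fin k → (Fin 2 → ℤ)) : Fin 2 → ℤ :=
  ∑ i : Fin k, (M2 ^ (i : ℕ)).mulVec (d i)

/-- The set of weights (numbers of nonzero digits) of representations of `(a,b)ᵀ`
in base `M2` with digits `{p, z}`. -/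
def RepWeights (a b : ℤ) : Set ℕ :=
  {w : ℕ | ∃ (k : ℕ) (d : Fin k → (Fin 2 → ℤ)),
    (∀ i, d i = pd ∨ d i = zd) ∧ val2 d = ![a, b] ∧
    (Finset.univ.filter (fun i : Fin k => d i = pd)).card = w}

/-!
Since `M^i p = ((-1)^(i+1) i, (-1)^i)`, a representation of `(a,b)` of weight `w` is a set `S` of
`w` digit positions with `b = ∑_{i ∈ S} (-1)^i`; hence `|b| ≤ w` and `w ≡ b (mod 2)`. Conversely,
`|b|` positions below `2|b|`, all even if `b ≥ 0` and all odd otherwise, produce `b`, and the first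
coordinate is then corrected by at most two pairs `{E, O}` of positions above them, `E` even and
`O` odd: such a pair does not change the second coordinate and adds `O - E`, an arbitrary odd
integer, to the first.
-/

/-- `S` is the set of positions of the digit `p`. -/
def supportVal (S : Finset ℕ) : Fin 2 → ℤ := ∑ i ∈ S, (M2 ^ i).mulVec pd

lemma M2_pow_mulVec_pd (i : ℕ) :
    (M2 ^ i).mulVec pd = ![(-1) ^ (i + 1) * (i : ℤ), (-1) ^ i] := by
  induction i with
  | zero => funext j; fin_cases j <;> simp [pd]
  | succ n ih =>
    rw [pow_succ', ← Matrix.mulVec_mulVec, ih]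
    funext j
    fin_cases j <;> simp [M2, Matrix.mulVec, dotProduct, Fin.sum_univ_two, pow_succ]
    ring

lemma supportVal_apply_zero (S : Finset ℕ) :
    supportVal S 0 = ∑ i ∈ S, (-1) ^ (i + 1) * (i : ℤ) := by
  simp only [supportVal, Finset.sum_apply, M2_pow_mulVec_pd, Matrix.cons_val_zero]

lemma supportVal_apply_one (S : Finset ℕ) : supportVal S 1 = ∑ i ∈ S, (-1) ^ i := by
  simp only [supportVal, Finset.sum_apply, M2_pow_mulVec_pd, Matrix.cons_val_one,
    Matrix.cons_val_zero]

lemma supportVal_union {S T : Finset ℕ} (h : Disjoint S T) :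
    supportVal (S ∪ T) = supportVal S + supportVal T :=
  Finset.sum_union h

lemma val2_eq_sum_filter {k : ℕ} {d : Fin k → Fin 2 → ℤ} (hd : ∀ i, d i = pd ∨ d i = zd) :
    val2 d = ∑ i ∈ Finset.univ.filter (fun i => d i = pd), (M2 ^ (i : ℕ)).mulVec pd := by
  rw [Finset.sum_filter]
  refine Finset.sum_congr rfl fun i _ => ?_
  rcases hd i with h | h
  · simp [h]
  · have hz : zd = 0 := by funext j; fin_cases j <;> rfl
    have hp : pd ≠ 0 := fun h => by simpa [pd] using congrFun h 1
    simp [h, hz, hp.symm]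

lemma mem_repWeights_iff {a b : ℤ} {w : ℕ} :
    w ∈ RepWeights a b ↔ ∃ S : Finset ℕ, S.card = w ∧ supportVal S = ![a, b] := by
  constructor
  · rintro ⟨k, d, hd, hval, rfl⟩
    refine ⟨(Finset.univ.filter fun i => d i = pd).map Fin.valEmbedding,
      Finset.card_map _, ?_⟩
    rw [← hval, val2_eq_sum_filter hd, supportVal, Finset.sum_map]
    rfl
  · rintro ⟨S, rfl, hS⟩
    obtain ⟨k, hk⟩ := S.exists_nat_subset_range
    have hpz : pd ≠ zd := fun h => by simpa [pd, zd] using congrFun h 1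
    set d : Fin k → Fin 2 → ℤ := fun i => if (i : ℕ) ∈ S then pd else zd
    have hd : ∀ i, d i = pd ∨ d i = zd := fun i => by by_cases h : (i : ℕ) ∈ S <;> simp [d, h]
    have hS' : (Finset.univ.filter fun i => d i = pd).map Fin.valEmbedding = S := by
      ext n
      simp only [Finset.mem_map, Finset.mem_filter, Finset.mem_univ, true_and,
        Fin.valEmbedding_apply, d]
      constructor
      · rintro ⟨i, hi, rfl⟩
        by_contra h
        exact hpz (by simpa [h] using hi.symm)
      · intro hn
        exact ⟨⟨n, Finset.mem_range.1 (hk hn)⟩, by simp [hn], rfl⟩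
    refine ⟨k, d, hd, ?_, ?_⟩
    · rw [val2_eq_sum_filter hd, ← hS, ← hS', supportVal, Finset.sum_map]
      rfl
    · rw [← hS', Finset.card_map]

lemma natAbs_sum_le_card_and_mod_two_of_sign {ι : Type*} [DecidableEq ι] (s : Finset ι) {f : ι → ℤ}
    (hf : ∀ i, f i = 1 ∨ f i = -1) :
    (∑ i ∈ s, f i).natAbs ≤ s.card ∧ (∑ i ∈ s, f i).natAbs % 2 = s.card % 2 := by
  induction s using Finset.induction_on with
  | empty => simp
  | insert a s ha ih =>
    rw [Finset.sum_insert ha, Finset.card_insert_of_notMem ha]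
    rcases hf a with h | h <;> omega

lemma natAbs_le_and_mod_two_of_mem_repWeights {a b : ℤ} {w : ℕ} (hw : w ∈ RepWeights a b) :
    b.natAbs ≤ w ∧ b.natAbs % 2 = w % 2 := by
  classical
  obtain ⟨S, rfl, hS⟩ := mem_repWeights_iff.1 hw
  have hb : b = ∑ i ∈ S, (-1) ^ i := by rw [← supportVal_apply_one, hS]; rfl
  exact hb ▸ natAbs_sum_le_card_and_mod_two_of_sign S (neg_one_pow_eq_or ℤ)

lemma supportVal_pair {E O : ℕ} (hE : Even E) (hO : Odd O) :
    supportVal {E, O} = ![(O : ℤ) - E, 0] := by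
  have hne : E ≠ O := by rintro rfl; exact Nat.not_odd_iff_even.2 hE hO
  funext j
  fin_cases j
  · simp [supportVal_apply_zero, Finset.sum_pair hne, hE.add_one.neg_one_pow,
      hO.add_one.neg_one_pow]
    ring
  · simp [supportVal_apply_one, Finset.sum_pair hne, hE.neg_one_pow, hO.neg_one_pow]

lemma exists_supportVal_eq_of_odd {r : ℤ} (hr : Odd r) (N : ℕ) :
    ∃ P : Finset ℕ, P.card ≤ 2 ∧ (∀ i ∈ P, N ≤ i) ∧ supportVal P = ![r, 0] := by
  obtain ⟨t, rfl | rfl⟩ := Int.eq_nat_or_neg r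
  · have ht : Odd t := by exact_mod_cast hr
    refine ⟨{2 * N, 2 * N + t}, Finset.card_le_two, by simp; omega, ?_⟩
    rw [supportVal_pair (even_two_mul N) ((even_two_mul N).add_odd ht)]
    push_cast; ring_nf
  · have ht : Odd t := by exact_mod_cast odd_neg.1 hr
    have hO : Odd (2 * N + 1) := odd_two_mul_add_one N
    refine ⟨{2 * N + 1 + t, 2 * N + 1}, Finset.card_le_two, by simp; omega, ?_⟩
    rw [supportVal_pair (hO.add_odd ht) hO]
    push_cast; ring_nf

lemma exists_supportVal_eq (r : ℤ) (N : ℕ) :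
    ∃ P : Finset ℕ, P.card ≤ 4 ∧ (∀ i ∈ P, N ≤ i) ∧ supportVal P = ![r, 0] := by
  rcases Int.even_or_odd r with hr | hr
  · obtain ⟨P, hPc, hPN, hPv⟩ := exists_supportVal_eq_of_odd (hr.sub_odd odd_one) N
    obtain ⟨Q, hQc, hQN, hQv⟩ := exists_supportVal_eq_of_odd odd_one (N + P.sup id + 1)
    have hdisj : Disjoint P Q := Finset.disjoint_left.2 fun i hP hQ => by
      have := hQN i hQ; have := Finset.le_sup (f := id) hP; simp only [id] at this; omega
    refine ⟨P ∪ Q, (Finset.card_union_le P Q).trans (by omega), fun i hi => ?_, ?_⟩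
    · rcases Finset.mem_union.1 hi with h | h
      · exact hPN i h
      · have := hQN i h; omega
    · rw [supportVal_union hdisj, hPv, hQv]
      funext j; fin_cases j <;> simp
  · obtain ⟨P, hPc, hPN, hPv⟩ := exists_supportVal_eq_of_odd hr N
    exact ⟨P, by omega, hPN, hPv⟩

lemma exists_supportVal_apply_one_eq (b : ℤ) :
    ∃ B : Finset ℕ, B.card = b.natAbs ∧ (∀ i ∈ B, i < 2 * b.natAbs) ∧ supportVal B 1 = b := by
  have key : ∀ n e : ℕ, e < 2 → ∃ B : Finset ℕ, B.card = n ∧ (∀ i ∈ B, i < 2 * n) ∧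
      supportVal B 1 = n * (-1) ^ e := fun n e he => by
    have hinj : Function.Injective fun j => 2 * j + e := fun j k h => by simp at h; omega
    refine ⟨(Finset.range n).image fun j => 2 * j + e, by
      rw [Finset.card_image_of_injective _ hinj, Finset.card_range], fun i hi => ?_, ?_⟩
    · obtain ⟨j, hj, rfl⟩ := Finset.mem_image.1 hi
      rw [Finset.mem_range] at hj; omega
    · simp [supportVal_apply_one, Finset.sum_image fun j _ k _ h => hinj h, pow_add, pow_mul]
  obtain ⟨n, rfl | rfl⟩ := Int.eq_nat_or_neg b
  · simpa using key n 0 (by norm_num)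
  · simpa using key n 1 (by norm_num)

lemma exists_mem_repWeights_le (a b : ℤ) : ∃ w ∈ RepWeights a b, w ≤ b.natAbs + 4 := by
  obtain ⟨B, hBc, hBlt, hBv⟩ := exists_supportVal_apply_one_eq b
  obtain ⟨P, hPc, hPge, hPv⟩ := exists_supportVal_eq (a - supportVal B 0) (2 * b.natAbs)
  have hdisj : Disjoint B P := Finset.disjoint_left.2 fun i hB hP => by
    have := hBlt i hB; have := hPge i hP; omega
  refine ⟨(B ∪ P).card, mem_repWeights_iff.2 ⟨B ∪ P, rfl, ?_⟩, ?_⟩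
  · rw [supportVal_union hdisj, hPv]
    funext j; fin_cases j <;> simp [hBv]
  · have := Finset.card_union_le B P; omega

theorem stmt18 (a b : ℤ) :
    sInf (RepWeights a b) ∈ ({b.natAbs, b.natAbs + 2, b.natAbs + 4} : Set ℕ) := by
  obtain ⟨w, hw, hwle⟩ := exists_mem_repWeights_le a b
  have hmin := natAbs_le_and_mod_two_of_mem_repWeights (Nat.sInf_mem ⟨w, hw⟩)
  have hle : sInf (RepWeights a b) ≤ w := Nat.sInf_le hw
  simp only [Set.mem_insert_iff, Set.mem_singleton_iff]
  omega
end
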